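/- For every integer d ≥ 1, every odd integer s ≥ 3, and every integer n ≥ d + 2, the chain-of-cubes matrix χ_{d,s} is a testing pattern (its (s+1)·2^d rows are pairwise distinct and it has full column rank d + s), and χ_{d,s} is good for P_{d+1} (for functions on F_2^n). -/
import Mathlib

open Finset

/-- `PolyDeg n d` : the set of functions `F₂ⁿ → F₂` that are polynomials of degree
at most `d` over `F₂`. -/
def PolyDeg (n d : ℕ) : Set ((Fin n → ZMod 2) → ZMod 2) :=
  {f | ∃ c : Finset (Fin n) → ZMod 2, ∀ x, f x =
    ∑ S ∈ Finset.univ.filter (fun S : Finset (Fin n) => S.card ≤ d),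
      c S * ∏ i ∈ S, x i}

/-- `T_{X,f}(M) = Σ_i f(y_i)` where the `y`'s are the rows of `X * M`. -/
def patternSum {ι κ : Type} [Fintype ι] [Fintype κ] {n : ℕ}
    (X : Matrix ι κ (ZMod 2)) (f : (Fin n → ZMod 2) → ZMod 2)
    (M : Matrix κ (Fin n) (ZMod 2)) : ZMod 2 :=
  ∑ i, f ((X * M) i)

/-- `X` is complete for `P_d`: `T_{X,f}(M) = 0` for every `f ∈ P_d` and every `M`. -/
def IsCompletePattern {ι κ : Type} [Fintype ι] [Fintype κ] (n d : ℕ)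
    (X : Matrix ι κ (ZMod 2)) : Prop :=
  ∀ f ∈ PolyDeg n d, ∀ M : Matrix κ (Fin n) (ZMod 2), patternSum X f M = 0

/-- `X` is minimally sound for `P_d`: for every `f ∉ P_d` there is `M` with
`T_{X,f}(M) = 1`. -/
def IsMinimallySoundPattern {ι κ : Type} [Fintype ι] [Fintype κ] (n d : ℕ)
    (X : Matrix ι κ (ZMod 2)) : Prop :=
  ∀ f : (Fin n → ZMod 2) → ZMod 2, f ∉ PolyDeg n d →
    ∃ M : Matrix κ (Fin n) (ZMod 2), patternSum X f M = 1

/-- The chain-of-cubes matrix `χ_{d,s}`.  Rows are indexed by pairs `(i, j)` with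
`i ∈ {0, …, s}` (zero-based version of `{1, …, s+1}`) and `j ∈ {0,1}^d`; columns by
`Fin d ⊕ Fin s` (the `d` cube columns followed by the `s` chain columns).
In row `(i, j)`, the cube coordinates equal `j`; the chain coordinates are: if
`i < s` then value `1` exactly in chain column `i`, and if `i = s` then value `1`
in every chain column. -/
def chainOfCubes (d s : ℕ) :
    Matrix (Fin (s + 1) × (Fin d → ZMod 2)) (Fin d ⊕ Fin s) (ZMod 2) :=
  Matrix.of fun r c =>
    match c with
    | Sum.inl a => r.2 a
    | Sum.inr b => if r.1.val = s ∨ r.1.val = b.val then 1 else 0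

/-- `PolyDeg n d` : the set of functions `F₂ⁿ → F₂` that are polynomials of degree
at most `d` over `F₂`. -/
def indVec (n : ℕ) (A : Finset (Fin n)) : Fin n → ZMod 2 := fun m => if m ∈ A then 1 else 0

def coefF {n : ℕ} (f : (Fin n → ZMod 2) → ZMod 2) (S : Finset (Fin n)) : ZMod 2 :=
  ∑ T ∈ S.powerset, f (indVec n T)

lemma indVec_union {n : ℕ} {A B : Finset (Fin n)} (h : Disjoint A B) :
    indVec n (A ∪ B) = indVec n A + indVec n B := by
  funext m
  simp only [indVec, Pi.add_apply, mem_union]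
  by_cases hA : m ∈ A
  · have hB : m ∉ B := Finset.disjoint_left.mp h hA
    simp [hA, hB]
  · by_cases hB : m ∈ B <;> simp [hA, hB]

lemma indVec_insert {n : ℕ} {a : Fin n} {A : Finset (Fin n)} (h : a ∉ A) :
    indVec n (insert a A) = indVec n A + indVec n {a} := by
  rw [Finset.insert_eq, Finset.union_comm, ← indVec_union (by simpa using h)]

lemma sum_coefF {n : ℕ} (A : Finset (Fin n)) :
    ∀ f : (Fin n → ZMod 2) → ZMod 2, ∑ S ∈ A.powerset, coefF f S = f (indVec n A) := by
  induction A using Finset.induction_on with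
  | empty => intro f; simp [coefF]
  | @insert a A ha ih =>
    intro f
    rw [Finset.sum_powerset_insert ha]
    have hins : ∀ S ∈ A.powerset, coefF f (insert a S) =
        coefF f S + coefF (fun x => f (x + indVec n {a})) S := by
      intro S hS
      have haS : a ∉ S := fun hmem => ha (Finset.mem_powerset.mp hS hmem)
      rw [coefF, Finset.sum_powerset_insert haS, ← coefF]
      congr 1
      refine Finset.sum_congr rfl fun T hT => ?_
      have haT : a ∉ T := fun hmem => haS (Finset.mem_powerset.mp hT hmem)
      rw [indVec_insert haT]
    rw [Finset.sum_congr rfl hins, Finset.sum_add_distrib]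
    have key : ∀ x y : ZMod 2, x + (x + y) = y := by decide
    rw [key, ih, indVec_insert ha]

lemma mem_polyDeg_of_coefF {n : ℕ} (f : (Fin n → ZMod 2) → ZMod 2) (e : ℕ)
    (h : ∀ S : Finset (Fin n), e < S.card → coefF f S = 0) : f ∈ PolyDeg n e := by
  refine ⟨coefF f, fun x => ?_⟩
  classical
  set A : Finset (Fin n) := univ.filter (fun m => x m = 1) with hA
  have hx : x = indVec n A := by
    funext m
    have h01 : x m = 0 ∨ x m = 1 := by
      generalize x m = y; revert y; decide
    rcases h01 with h0 | h1
    · simp [indVec, hA, h0]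
    · simp [indVec, hA, h1]
  have hprod : ∀ S : Finset (Fin n), (∏ k ∈ S, indVec n A k) = if S ⊆ A then 1 else 0 := by
    intro S
    by_cases hSA : S ⊆ A
    · rw [if_pos hSA]
      apply Finset.prod_eq_one
      intro k hk
      simp [indVec, hSA hk]
    · rw [if_neg hSA]
      obtain ⟨k, hkS, hkA⟩ := Finset.not_subset.mp hSA
      exact Finset.prod_eq_zero hkS (by simp [indVec, hkA])
  rw [hx, ← sum_coefF A f]
  have : ∀ S ∈ univ.filter (fun S : Finset (Fin n) => S.card ≤ e),
      coefF f S * ∏ k ∈ S, indVec n A k = if S ⊆ A then coefF f S else 0 := by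
    intro S _
    rw [hprod S]
    by_cases hSA : S ⊆ A <;> simp [hSA]
  rw [Finset.sum_congr rfl this, ← Finset.sum_filter]
  symm
  apply Finset.sum_subset
  · intro S hS
    simp only [mem_filter, mem_univ, true_and] at hS
    exact Finset.mem_powerset.mpr hS.2
  · intro S hS hS'
    simp only [mem_filter, mem_univ, true_and, not_and] at hS'
    apply h
    by_contra hc
    exact hS' (by omega) (Finset.mem_powerset.mp hS)

lemma zmod2_sum_pow_zero : ∑ x : ZMod 2, x ^ 0 = 0 := by decide

lemma cube_sum_zero {d n : ℕ} (u : Fin d → Fin n → ZMod 2) (B : Finset (Fin n))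
    (hB : B.card < d) :
    ∑ j : Fin d → ZMod 2, ∏ k ∈ B, (∑ a, j a * u a k) = 0 := by
  classical
  have h1 : ∀ j : Fin d → ZMod 2, ∏ k ∈ B, (∑ a, j a * u a k) =
      ∑ φ : ↥B → Fin d, (∏ k : ↥B, j (φ k)) * ∏ k : ↥B, u (φ k) k.1 := by
    intro j
    rw [← Finset.prod_attach B (fun k => ∑ a, j a * u a k)]
    rw [show (∏ k ∈ B.attach, ∑ a, j a * u a k.1) = ∏ k : ↥B, ∑ a ∈ univ, j a * u a k.1 from rfl]
    rw [Finset.prod_univ_sum]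
    rw [Fintype.piFinset_univ]
    exact Finset.sum_congr rfl fun φ _ => Finset.prod_mul_distrib
  simp only [h1]
  rw [Finset.sum_comm]
  apply Finset.sum_eq_zero
  intro φ _
  rw [← Finset.sum_mul]
  have hfib : ∀ j : Fin d → ZMod 2, (∏ k : ↥B, j (φ k)) =
      ∏ a : Fin d, j a ^ (univ.filter (fun k => φ k = a)).card := by
    intro j
    rw [← Finset.prod_fiberwise univ φ (fun k => j (φ k))]
    exact Finset.prod_congr rfl fun a _ => by
      rw [Finset.prod_congr rfl (fun k hk => by
        rw [(Finset.mem_filter.mp hk).2]), Finset.prod_const]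
  simp only [hfib]
  have h2 : ∑ j : Fin d → ZMod 2, ∏ a : Fin d, j a ^ (univ.filter (fun k => φ k = a)).card
      = ∏ a : Fin d, ∑ x : ZMod 2, x ^ (univ.filter (fun k => φ k = a)).card := by
    rw [Finset.prod_univ_sum, Fintype.piFinset_univ]
  rw [h2]
  have himg : univ.image φ ≠ univ := by
    intro h
    have h3 := Finset.card_image_le (s := (univ : Finset ↥B)) (f := φ)
    rw [h] at h3
    simp only [Finset.card_univ, Fintype.card_fin, Fintype.card_coe] at h3
    omega
  obtain ⟨a₀, _, ha₀⟩ := Finset.exists_of_ssubset (Finset.ssubset_univ_iff.mpr himg)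
  have hm : (univ.filter (fun k => φ k = a₀)).card = 0 := by
    rw [Finset.card_eq_zero]
    ext k
    simp only [Finset.mem_filter, Finset.mem_univ, true_and, Finset.notMem_empty, iff_false]
    intro h
    exact ha₀ (Finset.mem_image.mpr ⟨k, Finset.mem_univ k, h⟩)
  rw [Finset.prod_eq_zero (Finset.mem_univ a₀) (by rw [hm]; exact zmod2_sum_pow_zero), zero_mul]

lemma chain_row {d s n : ℕ} (M : Matrix (Fin d ⊕ Fin s) (Fin n) (ZMod 2))
    (i : Fin (s+1)) (j : Fin d → ZMod 2) (k : Fin n) :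
    (chainOfCubes d s * M) (i, j) k =
      (∑ b, (if i.val = s ∨ i.val = b.val then 1 else 0) * M (Sum.inr b) k)
      + ∑ a, j a * M (Sum.inl a) k := by
  rw [Matrix.mul_apply, Fintype.sum_sum_type, add_comm]
  rfl

lemma sum_chain_coeff {s : ℕ} (hs : 3 ≤ s) (b : Fin s) :
    ∑ i : Fin (s+1), (if i.val = s ∨ i.val = b.val then (1 : ZMod 2) else 0) = 0 := by
  rw [Finset.sum_boole]
  have : univ.filter (fun i : Fin (s+1) => i.val = s ∨ i.val = b.val) =
      {(⟨s, by omega⟩ : Fin (s+1)), ⟨b.val, by omega⟩} := by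
    ext i
    simp [Fin.ext_iff]
  rw [this]
  rw [Finset.card_insert_of_notMem (by simp [Fin.ext_iff]; omega), Finset.card_singleton]
  decide

lemma chain_complete {d s n : ℕ} (hs : 3 ≤ s) (hodd : Odd s) :
    ∀ f ∈ PolyDeg n (d + 1), ∀ M : Matrix (Fin d ⊕ Fin s) (Fin n) (ZMod 2),
      patternSum (chainOfCubes d s) f M = 0 := by
  classical
  intro f hf M
  obtain ⟨c, hc⟩ := hf
  unfold patternSum
  simp only [hc]
  rw [Finset.sum_comm]
  apply Finset.sum_eq_zero
  intro S hS
  rw [← Finset.mul_sum]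
  have hScard : S.card ≤ d + 1 := by simpa using hS
  suffices h : (∑ r : Fin (s+1) × (Fin d → ZMod 2), ∏ k ∈ S, (chainOfCubes d s * M) r k) = 0 by
    rw [h, mul_zero]
  rw [Fintype.sum_prod_type]
  have hrw : ∀ (i : Fin (s+1)) (j : Fin d → ZMod 2),
      (∏ k ∈ S, (chainOfCubes d s * M) (i, j) k) =
      ∑ T ∈ S.powerset,
        (∏ k ∈ T, ∑ b, (if i.val = s ∨ i.val = b.val then (1:ZMod 2) else 0) * M (Sum.inr b) k) *
        ∏ k ∈ S \ T, ∑ a, j a * M (Sum.inl a) k := by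
    intro i j
    rw [Finset.prod_congr rfl (fun k _ => chain_row M i j k)]
    exact Finset.prod_add _ _ S
  simp only [hrw]
  have step : (∑ i : Fin (s+1), ∑ j : Fin d → ZMod 2, ∑ T ∈ S.powerset,
      (∏ k ∈ T, ∑ b, (if i.val = s ∨ i.val = b.val then (1:ZMod 2) else 0) * M (Sum.inr b) k) *
        ∏ k ∈ S \ T, ∑ a, j a * M (Sum.inl a) k)
      = ∑ T ∈ S.powerset,
        (∑ i : Fin (s+1), ∏ k ∈ T, ∑ b, (if i.val = s ∨ i.val = b.val then (1:ZMod 2) else 0) * M (Sum.inr b) k) *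
        (∑ j : Fin d → ZMod 2, ∏ k ∈ S \ T, ∑ a, j a * M (Sum.inl a) k) := by
    refine Eq.trans (Finset.sum_congr rfl fun i _ => Finset.sum_comm) ?_
    rw [Finset.sum_comm]
    refine Finset.sum_congr rfl fun T _ => ?_
    rw [Finset.sum_mul]
    exact Finset.sum_congr rfl fun i _ => (Finset.mul_sum _ _ _).symm
  rw [step]
  apply Finset.sum_eq_zero
  intro T hT
  by_cases hcd : (S \ T).card < d
  · rw [cube_sum_zero (fun a => M (Sum.inl a)) _ hcd, mul_zero]
  · have hTS : T ⊆ S := Finset.mem_powerset.mp hT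
    have hsd : (S \ T).card = S.card - T.card := Finset.card_sdiff_of_subset hTS
    have hT1 : T.card ≤ 1 := by
      have := Finset.card_le_card hTS
      omega
    have hcase : T.card = 0 ∨ T.card = 1 := by omega
    rcases hcase with h0 | h1
    · rw [Finset.card_eq_zero.mp h0]
      have : (∑ i : Fin (s+1), ∏ k ∈ (∅ : Finset (Fin n)),
          ∑ b, (if i.val = s ∨ i.val = b.val then (1:ZMod 2) else 0) * M (Sum.inr b) k) = 0 := by
        simp only [Finset.prod_empty, Finset.sum_const, Finset.card_univ, Fintype.card_fin,
          nsmul_eq_mul, mul_one]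
        rw [← ZMod.natCast_mod]
        have hodd' := Nat.odd_iff.mp hodd
        rw [show (s+1) % 2 = 0 by omega]
        simp
      rw [this, zero_mul]
    · obtain ⟨m, rfl⟩ := Finset.card_eq_one.mp h1
      have : (∑ i : Fin (s+1), ∏ k ∈ ({m} : Finset (Fin n)),
          ∑ b, (if i.val = s ∨ i.val = b.val then (1:ZMod 2) else 0) * M (Sum.inr b) k) = 0 := by
        simp only [Finset.prod_singleton]
        rw [Finset.sum_comm]
        apply Finset.sum_eq_zero
        intro b _
        rw [← Finset.sum_mul, sum_chain_coeff hs b, zero_mul]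
      rw [this, zero_mul]

lemma sum_powerset_union {n : ℕ} {T : Finset (Fin n)} :
    ∀ K : Finset (Fin n), Disjoint T K → ∀ f : Finset (Fin n) → ZMod 2,
      ∑ U ∈ (T ∪ K).powerset, f U = ∑ R ∈ T.powerset, ∑ J ∈ K.powerset, f (R ∪ J) := by
  intro K
  induction K using Finset.induction_on with
  | empty => intro _ f; simp
  | @insert a K' ha ih =>
    intro hdisj f
    have haT : a ∉ T := Finset.disjoint_right.mp hdisj (Finset.mem_insert_self a K')
    have hd' : Disjoint T K' := hdisj.mono_right (Finset.subset_insert a K')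
    rw [Finset.union_insert]
    rw [Finset.sum_powerset_insert (by simp [haT, ha])]
    rw [ih hd' f, ih hd' (fun U => f (insert a U))]
    rw [← Finset.sum_add_distrib]
    refine Finset.sum_congr rfl fun R hR => ?_
    rw [Finset.sum_powerset_insert ha (fun J => f (R ∪ J))]
    congr 1
    exact Finset.sum_congr rfl fun J _ => by rw [Finset.union_insert]

def Ecube {d : ℕ} (n : ℕ) (k : Fin d → Fin n) (j : Fin d → ZMod 2) : Fin n → ZMod 2 :=
  fun m => ∑ a, j a * indVec n {k a} m

def Gfun {d n : ℕ} (f : (Fin n → ZMod 2) → ZMod 2) (k : Fin d → Fin n) :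
    (Fin n → ZMod 2) → ZMod 2 :=
  fun v => ∑ j : Fin d → ZMod 2, f (v + Ecube n k j)

lemma Ecube_eq {d n : ℕ} {k : Fin d → Fin n} (hk : Function.Injective k)
    (j : Fin d → ZMod 2) :
    Ecube n k j = indVec n (Finset.image k (univ.filter (fun a => j a = 1))) := by
  funext m
  unfold Ecube indVec
  by_cases hm : m ∈ Finset.image k univ
  · obtain ⟨a₀, _, rfl⟩ := Finset.mem_image.mp hm
    rw [Finset.sum_eq_single a₀]
    · have : k a₀ ∈ ({k a₀} : Finset (Fin n)) := Finset.mem_singleton_self _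
      rw [if_pos this, mul_one]
      have hmem : k a₀ ∈ Finset.image k (univ.filter (fun a => j a = 1)) ↔ j a₀ = 1 := by
        constructor
        · intro h
          obtain ⟨a', ha', heq⟩ := Finset.mem_image.mp h
          obtain rfl := hk heq
          exact (Finset.mem_filter.mp ha').2
        · intro h
          exact Finset.mem_image.mpr ⟨a₀, Finset.mem_filter.mpr ⟨Finset.mem_univ _, h⟩, rfl⟩
      by_cases hj : j a₀ = 1
      · rw [if_pos (hmem.mpr hj), hj]
      · rw [if_neg (fun h => hj (hmem.mp h))]
        have : j a₀ = 0 ∨ j a₀ = 1 := by generalize j a₀ = y; revert y; decide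
        tauto
    · intro a _ hne
      rw [if_neg (by simp; exact fun h => hne (hk h.symm)), mul_zero]
    · intro h; exact absurd (Finset.mem_univ a₀) h
  · rw [if_neg (fun h => hm (Finset.mem_image.mp h |>.elim
      fun a ha => Finset.mem_image.mpr ⟨a, Finset.mem_univ a, ha.2⟩))]
    apply Finset.sum_eq_zero
    intro a _
    rw [if_neg (by simp; intro h; exact hm (Finset.mem_image.mpr ⟨a, Finset.mem_univ a, h.symm⟩)), mul_zero]

lemma sum_cube_subsets {d n : ℕ} {k : Fin d → Fin n} (hk : Function.Injective k)
    (h : Finset (Fin n) → ZMod 2) :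
    ∑ j : Fin d → ZMod 2, h (Finset.image k (univ.filter (fun a => j a = 1)))
      = ∑ J ∈ (Finset.image k univ).powerset, h J := by
  refine Finset.sum_nbij' (fun j => Finset.image k (univ.filter (fun a => j a = 1)))
    (fun J a => if k a ∈ J then 1 else 0) ?_ ?_ ?_ ?_ ?_
  · intro j _
    exact Finset.mem_powerset.mpr (Finset.image_subset_image (Finset.filter_subset _ _))
  · intro J _; exact Finset.mem_univ _
  · intro j _
    funext a
    have hmem : k a ∈ Finset.image k (univ.filter (fun a => j a = 1)) ↔ j a = 1 := by
      constructor
      · intro hh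
        obtain ⟨a', ha', heq⟩ := Finset.mem_image.mp hh
        obtain rfl := hk heq
        exact (Finset.mem_filter.mp ha').2
      · intro hh
        exact Finset.mem_image.mpr ⟨a, Finset.mem_filter.mpr ⟨Finset.mem_univ _, hh⟩, rfl⟩
    show (if k a ∈ Finset.image k (univ.filter (fun a => j a = 1)) then (1:ZMod 2) else 0) = j a
    by_cases hj : j a = 1
    · rw [if_pos (hmem.mpr hj), hj]
    · rw [if_neg (fun hh => hj (hmem.mp hh))]
      have : j a = 0 ∨ j a = 1 := by generalize j a = y; revert y; decide
      tauto
  · intro J hJ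
    have hJK : J ⊆ Finset.image k univ := Finset.mem_powerset.mp hJ
    ext m
    simp only [Finset.mem_image, Finset.mem_filter, Finset.mem_univ, true_and]
    constructor
    · rintro ⟨a, ha, rfl⟩
      by_contra hc
      rw [if_neg hc] at ha
      exact one_ne_zero ha.symm
    · intro hm
      obtain ⟨a, _, rfl⟩ := Finset.mem_image.mp (hJK hm)
      exact ⟨a, by rw [if_pos hm], rfl⟩
  · intro j _; rfl

lemma coefF_Gfun {d n : ℕ} (f : (Fin n → ZMod 2) → ZMod 2) {k : Fin d → Fin n}
    (hk : Function.Injective k) (T : Finset (Fin n))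
    (hdisj : Disjoint T (Finset.image k univ)) :
    coefF (Gfun f k) T = coefF f (T ∪ Finset.image k univ) := by
  unfold coefF Gfun
  rw [sum_powerset_union _ hdisj]
  refine Finset.sum_congr rfl fun R hR => ?_
  have hRT : R ⊆ T := Finset.mem_powerset.mp hR
  rw [← sum_cube_subsets hk (fun J => f (indVec n (R ∪ J)))]
  refine Finset.sum_congr rfl fun j _ => ?_
  rw [Ecube_eq hk j, ← indVec_union]
  exact Finset.disjoint_of_subset_left hRT
    (Finset.disjoint_of_subset_right (Finset.image_subset_image (Finset.filter_subset _ _)) hdisj)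

def Wfun {n : ℕ} (s : ℕ) (p q : Fin n → ZMod 2) : Fin s → Fin n → ZMod 2 :=
  fun b => if b.val = 0 then p else if b.val = 1 then q else 0

lemma pattern_rel {d s n : ℕ} (hs : 3 ≤ s) (hodd : Odd s)
    (f : (Fin n → ZMod 2) → ZMod 2) (k : Fin d → Fin n)
    (hsum : ∀ M : Matrix (Fin d ⊕ Fin s) (Fin n) (ZMod 2),
      patternSum (chainOfCubes d s) f M = 0)
    (p q : Fin n → ZMod 2) :
    Gfun f k p + Gfun f k q + Gfun f k 0 + Gfun f k (p + q) = 0 := by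
  classical
  set W := Wfun s p q with hW
  set M : Matrix (Fin d ⊕ Fin s) (Fin n) (ZMod 2) :=
    Matrix.of (Sum.elim (fun a => indVec n {k a}) W) with hM
  have key := hsum M
  unfold patternSum at key
  rw [Fintype.sum_prod_type] at key
  have key2 : ∑ i : Fin (s+1), Gfun f k
      (fun m => ∑ b, (if i.val = s ∨ i.val = b.val then (1:ZMod 2) else 0) * W b m) = 0 := by
    have step : ∑ i : Fin (s+1), Gfun f k
        (fun m => ∑ b, (if i.val = s ∨ i.val = b.val then (1:ZMod 2) else 0) * W b m)
        = ∑ x : Fin (s + 1), ∑ y : Fin d → ZMod 2, f ((chainOfCubes d s * M) (x, y)) := by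
      refine Finset.sum_congr rfl fun i _ => ?_
      unfold Gfun
      refine Finset.sum_congr rfl fun j _ => ?_
      congr 1
      funext m
      rw [chain_row]
      rfl
    rw [step, key]
  -- evaluate the inner vectors
  have hv : ∀ i : Fin (s+1),
      (fun m => ∑ b, (if i.val = s ∨ i.val = b.val then (1:ZMod 2) else 0) * W b m)
      = fun m => (if i.val = s ∨ i.val = 0 then (1:ZMod 2) else 0) * p m
          + (if i.val = s ∨ i.val = 1 then (1:ZMod 2) else 0) * q m := by
    intro i
    funext m
    rw [← Finset.sum_subset (Finset.subset_univ ({⟨0, by omega⟩, ⟨1, by omega⟩} : Finset (Fin s)))]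
    · rw [Finset.sum_pair (by simp [Fin.ext_iff])]
      have w0 : W ⟨0, by omega⟩ = p := by simp [hW, Wfun]
      have w1 : W ⟨1, by omega⟩ = q := by simp [hW, Wfun]
      rw [w0, w1]
    · intro b _ hb
      simp only [Finset.mem_insert, Finset.mem_singleton, Fin.ext_iff] at hb
      push_neg at hb
      have wb : W b = 0 := by
        simp only [hW, Wfun]
        rw [if_neg hb.1, if_neg hb.2]
      rw [wb]
      simp
  simp only [hv] at key2
  -- split the index sum
  set S3 : Finset (Fin (s+1)) := {⟨0, by omega⟩, ⟨1, by omega⟩, ⟨s, by omega⟩} with hS3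
  rw [← Finset.sum_add_sum_compl S3] at key2
  have hmem1 : (⟨0, by omega⟩ : Fin (s+1)) ∉ ({⟨1, by omega⟩, ⟨s, by omega⟩} : Finset (Fin (s+1))) := by
    simp [Fin.ext_iff]; omega
  have hmem2 : (⟨1, by omega⟩ : Fin (s+1)) ∉ ({⟨s, by omega⟩} : Finset (Fin (s+1))) := by
    simp [Fin.ext_iff]; omega
  rw [hS3, Finset.sum_insert hmem1, Finset.sum_insert hmem2, Finset.sum_singleton] at key2
  have e0 : (fun m => (if (0:ℕ) = s ∨ (0:ℕ) = 0 then (1:ZMod 2) else 0) * p m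
      + (if (0:ℕ) = s ∨ (0:ℕ) = 1 then (1:ZMod 2) else 0) * q m) = p := by
    funext m
    rw [if_pos (Or.inr rfl), if_neg (by omega), one_mul, zero_mul, add_zero]
  have e1 : (fun m => (if (1:ℕ) = s ∨ (1:ℕ) = 0 then (1:ZMod 2) else 0) * p m
      + (if (1:ℕ) = s ∨ (1:ℕ) = 1 then (1:ZMod 2) else 0) * q m) = q := by
    funext m
    rw [if_neg (by omega), if_pos (Or.inr rfl), one_mul, zero_mul, zero_add]
  have es : (fun m => (if s = s ∨ s = 0 then (1:ZMod 2) else 0) * p m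
      + (if s = s ∨ s = 1 then (1:ZMod 2) else 0) * q m) = p + q := by
    funext m
    rw [if_pos (Or.inl rfl), if_pos (Or.inl rfl), one_mul, one_mul]
    rfl
  rw [show ((⟨0, by omega⟩ : Fin (s+1)) : Fin (s+1)).val = 0 from rfl] at key2
  rw [e0, e1, es] at key2
  have ecomp : ∑ i ∈ S3ᶜ, Gfun f k
      (fun m => (if i.val = s ∨ i.val = 0 then (1:ZMod 2) else 0) * p m
          + (if i.val = s ∨ i.val = 1 then (1:ZMod 2) else 0) * q m)
      = Gfun f k 0 := by
    have hconst : ∀ i ∈ S3ᶜ, Gfun f k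
        (fun m => (if i.val = s ∨ i.val = 0 then (1:ZMod 2) else 0) * p m
            + (if i.val = s ∨ i.val = 1 then (1:ZMod 2) else 0) * q m) = Gfun f k 0 := by
      intro i hi
      rw [hS3] at hi
      simp only [Finset.mem_compl, Finset.mem_insert, Finset.mem_singleton, Fin.ext_iff] at hi
      push_neg at hi
      congr 1
      funext m
      rw [if_neg (by omega), if_neg (by omega), zero_mul, zero_mul, add_zero]
      rfl
    rw [Finset.sum_congr rfl hconst, Finset.sum_const]
    have hcard : S3ᶜ.card = s - 2 := by
      rw [Finset.card_compl]
      have : S3.card = 3 := by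
        rw [hS3, Finset.card_insert_of_notMem hmem1, Finset.card_insert_of_notMem hmem2,
          Finset.card_singleton]
      rw [this]
      simp
    rw [hcard, nsmul_eq_mul]
    have : ((s - 2 : ℕ) : ZMod 2) = 1 := by
      rw [← ZMod.natCast_mod]
      have := Nat.odd_iff.mp hodd
      rw [show (s - 2) % 2 = 1 by omega]
      exact Nat.cast_one
    rw [this, one_mul]
  rw [ecomp] at key2
  -- key2 : Gfun f k p + (Gfun f k q + Gfun f k (p+q)) + Gfun f k 0 = 0
  have final : ∀ A B C D : ZMod 2, A + (B + C) + D = 0 → A + B + D + C = 0 := by decide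
  exact final _ _ _ _ key2

lemma coefF_eq_zero_of_rel {n : ℕ} (G : (Fin n → ZMod 2) → ZMod 2)
    (Rel : ∀ p q, G p + G q + G 0 + G (p + q) = 0)
    (T : Finset (Fin n)) (hT : 2 ≤ T.card) : coefF G T = 0 := by
  classical
  obtain ⟨p, hp, q, hq, hpq⟩ := (Finset.one_lt_card (s := T)).mp (by omega)
  have hq' : q ∈ T.erase p := Finset.mem_erase.mpr ⟨fun h => hpq h.symm, hq⟩
  have hadd : ∀ a b, G (a + b) = G a + G b + G 0 := by
    intro a b
    have h := Rel a b
    generalize G a = A at h ⊢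
    generalize G b = B at h ⊢
    generalize G 0 = C at h ⊢
    generalize G (a + b) = D at h ⊢
    revert h; revert A B C D; decide
  have h1 : insert q ((T.erase p).erase q) = T.erase p := Finset.insert_erase hq'
  have h2 : insert p (T.erase p) = T := Finset.insert_erase hp
  have hpmem : p ∉ insert q ((T.erase p).erase q) := by
    rw [h1]; exact Finset.notMem_erase p T
  have hqmem : q ∉ (T.erase p).erase q := Finset.notMem_erase q _
  unfold coefF
  rw [← h2, ← h1, Finset.sum_powerset_insert hpmem]
  rw [Finset.sum_powerset_insert hqmem (fun t => G (indVec n t)),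
    Finset.sum_powerset_insert hqmem (fun t => G (indVec n (insert p t)))]
  rw [← Finset.sum_add_distrib, ← Finset.sum_add_distrib, ← Finset.sum_add_distrib]
  apply Finset.sum_eq_zero
  intro R hR
  have hRT' : R ⊆ (T.erase p).erase q := Finset.mem_powerset.mp hR
  have hqR : q ∉ R := fun h => hqmem (hRT' h)
  have hpR : p ∉ R := fun h => hpmem (Finset.mem_insert_of_mem (hRT' h))
  have hpqR : p ∉ insert q R := by
    simp only [Finset.mem_insert]
    push_neg
    exact ⟨hpq, hpR⟩
  rw [indVec_insert hqR, indVec_insert hpR, indVec_insert hpqR, indVec_insert hqR]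
  simp only [hadd]
  generalize G (indVec n R) = A
  generalize G (indVec n {q}) = B
  generalize G (indVec n {p}) = C
  generalize G 0 = D
  revert A B C D
  decide

lemma chain_injective {d s : ℕ} (hs : 3 ≤ s) : Function.Injective (chainOfCubes d s) := by
  rintro ⟨i1, j1⟩ ⟨i2, j2⟩ h
  have hj : j1 = j2 := by
    funext a
    exact congrFun h (Sum.inl a)
  have hcol : ∀ b : Fin s, (if i1.val = s ∨ i1.val = b.val then (1:ZMod 2) else 0)
      = (if i2.val = s ∨ i2.val = b.val then 1 else 0) := fun b => congrFun h (Sum.inr b)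
  have hi : i1 = i2 := by
    have hlt1 := i1.isLt
    have hlt2 := i2.isLt
    by_cases h1 : i1.val = s <;> by_cases h2 : i2.val = s
    · exact Fin.ext (by omega)
    · exfalso
      have hb : ∃ b : Fin s, b.val ≠ i2.val := by
        by_cases hz : i2.val = 0
        · exact ⟨⟨1, by omega⟩, by show (1:ℕ) ≠ i2.val; omega⟩
        · exact ⟨⟨0, by omega⟩, by show (0:ℕ) ≠ i2.val; omega⟩
      obtain ⟨b, hb⟩ := hb
      have hc := hcol b
      rw [if_pos (Or.inl h1), if_neg (by omega)] at hc
      exact one_ne_zero hc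
    · exfalso
      have hb : ∃ b : Fin s, b.val ≠ i1.val := by
        by_cases hz : i1.val = 0
        · exact ⟨⟨1, by omega⟩, by show (1:ℕ) ≠ i1.val; omega⟩
        · exact ⟨⟨0, by omega⟩, by show (0:ℕ) ≠ i1.val; omega⟩
      obtain ⟨b, hb⟩ := hb
      have hc := hcol b
      rw [if_pos (Or.inl h2), if_neg (by omega)] at hc
      exact one_ne_zero hc.symm
    · have hc := hcol ⟨i1.val, by omega⟩
      rw [if_pos (Or.inr rfl)] at hc
      by_cases he : i2.val = i1.val
      · exact Fin.ext (by omega)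
      · rw [if_neg (by simpa using (by omega : ¬(i2.val = s ∨ i2.val = i1.val)))] at hc
        exact absurd hc.symm zero_ne_one
  rw [Prod.ext_iff]
  exact ⟨hi, hj⟩

lemma chain_rank {d s : ℕ} (hs : 3 ≤ s) : (chainOfCubes d s).rank = d + s := by
  have hinj : Function.Injective (chainOfCubes d s).mulVecLin := by
    refine (injective_iff_map_eq_zero _).mpr ?_
    intro v hv
    have hentry : ∀ (i : Fin (s+1)) (j : Fin d → ZMod 2),
        (∑ a, j a * v (Sum.inl a)) +
          ∑ b, (if i.val = s ∨ i.val = b.val then (1:ZMod 2) else 0) * v (Sum.inr b) = 0 := by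
      intro i j
      have h0 := congrFun hv (i, j)
      simpa [Matrix.mulVecLin, Matrix.mulVec, dotProduct, Fintype.sum_sum_type,
        chainOfCubes] using h0
    have hchain : ∀ b : Fin s, v (Sum.inr b) = 0 := by
      intro b
      have h0 := hentry ⟨b.val, by omega⟩ 0
      simp only [Pi.zero_apply, zero_mul, Finset.sum_const_zero, zero_add] at h0
      rw [Finset.sum_eq_single b] at h0
      · rw [if_pos (Or.inr rfl), one_mul] at h0
        exact h0
      · intro b' _ hb'
        rw [if_neg, zero_mul]
        have := b.isLt
        simp only [not_or]
        constructor
        · omega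
        · intro hc
          exact hb' (Fin.ext (by omega)).symm
      · intro hmem; exact absurd (Finset.mem_univ b) hmem
    have hcube : ∀ a : Fin d, v (Sum.inl a) = 0 := by
      intro a
      have h0 := hentry ⟨0, by omega⟩ (Pi.single a 1)
      have h1 : (∑ b, (if (0:ℕ) = s ∨ (0:ℕ) = b.val then (1:ZMod 2) else 0) * v (Sum.inr b)) = 0 := by
        apply Finset.sum_eq_zero
        intro b _
        rw [hchain b, mul_zero]
      rw [show ((⟨0, by omega⟩ : Fin (s+1)) : Fin (s+1)).val = 0 from rfl] at h0
      rw [h1, add_zero] at h0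
      rw [Finset.sum_eq_single a] at h0
      · rwa [Pi.single_eq_same, one_mul] at h0
      · intro a' _ ha'
        rw [Pi.single_eq_of_ne ha', zero_mul]
      · intro hmem; exact absurd (Finset.mem_univ a) hmem
    funext c
    cases c with
    | inl a => exact hcube a
    | inr b => exact hchain b
  have : (chainOfCubes d s).rank = Module.finrank (ZMod 2)
      (LinearMap.range (chainOfCubes d s).mulVecLin) := rfl
  rw [this, LinearMap.finrank_range_of_inj hinj, Module.finrank_pi]
  simp

lemma chain_sound {d s n : ℕ} (hs : 3 ≤ s) (hodd : Odd s) :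
    IsMinimallySoundPattern n (d + 1) (chainOfCubes d s) := by
  intro f hf
  by_contra hno
  push_neg at hno
  have hsum : ∀ M, patternSum (chainOfCubes d s) f M = 0 := by
    intro M
    have h := hno M
    generalize patternSum (chainOfCubes d s) f M = x at h ⊢
    revert h; revert x; decide
  apply hf
  apply mem_polyDeg_of_coefF
  intro S hScard
  have hdS : d ≤ S.card := by omega
  obtain ⟨K, hKS, hK⟩ := Finset.exists_subset_card_eq hdS
  set k : Fin d → Fin n := fun a => ((K.orderIsoOfFin hK) a : Fin n) with hkdef
  have hk : Function.Injective k := fun a b h =>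
    (K.orderIsoOfFin hK).injective (Subtype.coe_injective h)
  have himg : Finset.image k univ = K := by
    ext m
    simp only [Finset.mem_image, Finset.mem_univ, true_and]
    constructor
    · rintro ⟨a, rfl⟩; exact ((K.orderIsoOfFin hK) a).2
    · intro hm
      refine ⟨(K.orderIsoOfFin hK).symm ⟨m, hm⟩, ?_⟩
      show ((K.orderIsoOfFin hK) ((K.orderIsoOfFin hK).symm ⟨m, hm⟩) : Fin n) = m
      rw [OrderIso.apply_symm_apply]
  have hdisj : Disjoint (S \ K) K := Finset.sdiff_disjoint
  have hunion : S \ K ∪ K = S := Finset.sdiff_union_of_subset hKS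
  have hTcard : 2 ≤ (S \ K).card := by
    rw [Finset.card_sdiff_of_subset hKS]; omega
  have hrel := pattern_rel hs hodd f k hsum
  have h1 : coefF (Gfun f k) (S \ K) = coefF f S := by
    rw [coefF_Gfun f hk (S \ K) (by rw [himg]; exact hdisj), himg, hunion]
  rw [← h1]
  exact coefF_eq_zero_of_rel (Gfun f k) hrel (S \ K) hTcard

theorem stmt_7 (d s n : ℕ) (hd : 1 ≤ d) (hs : 3 ≤ s) (hodd : Odd s)
    (hn : d + 2 ≤ n) :
    Function.Injective (chainOfCubes d s) ∧
    (chainOfCubes d s).rank = d + s ∧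
    IsCompletePattern n (d + 1) (chainOfCubes d s) ∧
    IsMinimallySoundPattern n (d + 1) (chainOfCubes d s) := by
  exact ⟨chain_injective hs, chain_rank hs, chain_complete hs hodd, chain_sound hs hodd⟩
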